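/- arXiv:1501.05104 — 2 statements merged into one kernel-verified Lean document; each statement's English description precedes it below -/
import Mathlib

section
/- A wiring F in the Stack semiring (a finite sum of stack operations) is nilpotent if and only if it is acyclic, i.e., no power Fᵏ contains a cycle. -/
/-!  Base definitions for the Stack semiring: unary flows ("stack operations")
`τ(x) ⊣ σ(x)` are modelled as pairs of lists of unary function symbols
(outermost symbol first).  The resolution product of two stack operations is
defined when one of the two sequences to be unified is a prefix of the other. -/

/-- A stack operation `τ(x) ⊣ σ(x)`: the first component is the head/left term
`τ(x)`, the second the body/right term `σ(x)`, each a sequence of unary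
function symbols applied to the variable `x` (outermost first). -/
abbrev SOp := List ℕ × List ℕ

/-- Resolution product of stack operations (`none` = undefined = 0).
`(τ ⊣ σ)(ρ ⊣ χ)` unifies `σ(x)` with `ρ(y)`. -/
def scomp (f g : SOp) : Option SOp :=
  if f.2 <+: g.1 then some (f.1 ++ g.1.drop f.2.length, g.2)
  else if g.1 <+: f.2 then some (f.1, g.2 ++ f.2.drop g.1.length)
  else none

/-- Height of a stack operation: max of the heights of its two terms. -/
def hOp (f : SOp) : ℕ := max f.1.length f.2.length

/-- A stack operation is a cycle iff its two terms are matchable, which for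
unary terms `τ(x)`, `σ(y)` means one sequence is a prefix of the other. -/
def isCycleS (f : SOp) : Prop := f.1 <+: f.2 ∨ f.2 <+: f.1

/-- `f` is increasing when `h(τ(x)) ≥ h(σ(x))`. -/
def incP (f : SOp) : Prop := f.2.length ≤ f.1.length

/-- `f` is decreasing when `h(τ(x)) ≤ h(σ(x))`. -/
def decP (f : SOp) : Prop := f.1.length ≤ f.2.length

instance : DecidablePred incP := fun f => inferInstanceAs (Decidable (_ ≤ _))
instance : DecidablePred decP := fun f => inferInstanceAs (Decidable (_ ≤ _))

/-- A wiring of the Stack semiring: a finite set (sum) of stack operations. -/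
abbrev SWiring := Finset SOp

/-- Product of wirings: pointwise products of flows, keeping defined ones. -/
def smul (F G : SWiring) : SWiring :=
  (F ×ˢ G).biUnion fun p => (scomp p.1 p.2).toFinset

/-- Powers of a wiring (`spow F 0` is the unit wiring `{x ⊣ x}`). -/
def spow (F : SWiring) : ℕ → SWiring
  | 0 => {(([] : List ℕ), ([] : List ℕ))}
  | n + 1 => smul (spow F n) F

/-- Nilpotency: some (positive) power is 0, i.e. the empty wiring. -/
def SNilpotent (F : SWiring) : Prop := ∃ n, 0 < n ∧ spow F n = ∅

/-- Cyclicity: some power contains a cycle. -/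
def SCyclic (F : SWiring) : Prop := ∃ k, 0 < k ∧ ∃ f ∈ spow F k, isCycleS f

/-- Increasing part of a wiring. -/
def incF (F : SWiring) : SWiring := F.filter incP

/-- Decreasing part of a wiring. -/
def decF (F : SWiring) : SWiring := F.filter decP

/-- The shortcut operation `short(F) = F + F↓·F↑`. -/
def short (F : SWiring) : SWiring := F ∪ smul (decF F) (incF F)

/-- Height of a wiring (0 for the empty wiring). -/
def wheightS (F : SWiring) : ℕ := F.sup hOp

/-- The function symbols occurring in a wiring. -/
def symbolsS (F : SWiring) : Finset ℕ :=
  F.biUnion fun f => f.1.toFinset ∪ f.2.toFinset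

/-- Size of a wiring: total number of function symbol occurrences. -/
def sizeS (F : SWiring) : ℕ := ∑ f ∈ F, (f.1.length + f.2.length)

/-- The saturation `sat(F) = Σₙ shortⁿ(F)`, least fixpoint of `short`
containing `F`. -/
def satSet (F : SWiring) : Set SOp := ⋃ n, (short^[n] F : Finset SOp)

/-!
A flow `τ ⊣ σ` acts on stacks by prefix rewriting (pop `σ`, push `τ`), the product of flows is
the composition of these partial maps, and a flow is determined by its action; hence the product
is associative.

A cycle squares to a cycle, so a cyclic wiring has nonzero powers of unbounded exponent and is not
nilpotent. Conversely, if no power of `F` vanishes, Kőnig's lemma yields an infinite sequence of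
flows of `F` whose partial products `P n` are all defined. If the bodies of the `P n` grow
infinitely often, then at each growth step the head of `P n` is a prefix of a body of a flow of
`F`; two such heads coincide, and the flow leading from one to the other is a cycle. Otherwise
the heads form an infinite run of stacks. From a position whose height is never undercut later,
the run reads at most `h = wheightS F` symbols, so two such positions with the same top `h`
symbols bound a cycle.
-/

theorem isCycleS_of_prefix {s : SOp} {w : List ℕ} (h₁ : s.1 <+: w) (h₂ : s.2 <+: w) :
    isCycleS s :=
  List.prefix_or_prefix_of_prefix h₁ h₂

theorem isCycleS.exists_scomp_self {c : SOp} (hc : isCycleS c) :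
    ∃ d, scomp c c = some d ∧ isCycleS d := by
  unfold scomp
  split_ifs with h₁ h₂
  · exact ⟨_, rfl, Or.inr (h₁.trans (List.prefix_append _ _))⟩
  · exact ⟨_, rfl, Or.inl (h₂.trans (List.prefix_append _ _))⟩
  · exact (hc.elim h₂ h₁).elim

namespace SOp

def act (f : SOp) (w : List ℕ) : Option (List ℕ) :=
  if f.2 <+: w then some (f.1 ++ w.drop f.2.length) else none

theorem act_eq_some_iff {f : SOp} {w v : List ℕ} :
    f.act w = some v ↔ ∃ x, w = f.2 ++ x ∧ v = f.1 ++ x := by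
  unfold act
  split_ifs with h
  · obtain ⟨x, rfl⟩ := h
    simp [eq_comm]
  · simp only [false_iff, not_exists, not_and]
    rintro x rfl -
    exact h (List.prefix_append _ _)

theorem act_snd (f : SOp) : f.act f.2 = some f.1 :=
  act_eq_some_iff.2 ⟨[], by simp, by simp⟩

theorem act_nil (w : List ℕ) : act ([], []) w = some w :=
  act_eq_some_iff.2 ⟨w, rfl, rfl⟩

theorem act_injective : Function.Injective act := by
  intro p q h
  obtain ⟨x, hp2, hp1⟩ := act_eq_some_iff.1 ((congrFun h p.2).symm.trans (act_snd p))
  obtain ⟨y, hq2, -⟩ := act_eq_some_iff.1 ((congrFun h q.2).trans (act_snd q))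
  have hx : x = [] := by
    have := congrArg List.length (hq2 ▸ hp2)
    simp only [List.length_append] at this
    exact List.eq_nil_of_length_eq_zero (by omega)
  subst hx
  exact Prod.ext (by simpa using hp1) (by simpa using hp2)

theorem act_scomp {f g p : SOp} (h : scomp f g = some p) (w : List ℕ) :
    p.act w = (g.act w).bind f.act := by
  obtain ⟨f₁, f₂⟩ := f
  obtain ⟨g₁, g₂⟩ := g
  refine Option.ext fun v => ?_
  simp only [Option.bind_eq_some_iff, act_eq_some_iff]
  unfold scomp at h
  split_ifs at h with h₁ h₂ <;> cases h
  · obtain ⟨r, hr⟩ := h₁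
    subst hr
    constructor
    · rintro ⟨x, rfl, rfl⟩
      exact ⟨_, ⟨x, rfl, rfl⟩, r ++ x, by simp, by simp⟩
    · rintro ⟨_, ⟨x, rfl, rfl⟩, z, hz, rfl⟩
      simp only [List.append_assoc, List.append_cancel_left_eq] at hz
      exact ⟨x, rfl, by simp [hz]⟩
  · obtain ⟨r, hr⟩ := h₂
    subst hr
    constructor
    · rintro ⟨x, rfl, rfl⟩
      exact ⟨_, ⟨r ++ x, by simp, rfl⟩, x, by simp, rfl⟩
    · rintro ⟨_, ⟨x, rfl, rfl⟩, z, hz, rfl⟩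
      simp only [List.append_assoc, List.append_cancel_left_eq] at hz
      exact ⟨z, by simp [hz], rfl⟩

theorem isSome_scomp_of_act {f g : SOp} {w u v : List ℕ} (hg : g.act w = some u)
    (hf : f.act u = some v) : (scomp f g).isSome := by
  obtain ⟨y, -, rfl⟩ := act_eq_some_iff.1 hg
  obtain ⟨z, hz, -⟩ := act_eq_some_iff.1 hf
  have := List.prefix_or_prefix_of_prefix (List.prefix_append g.1 y)
    (hz ▸ List.prefix_append f.2 z)
  unfold scomp
  split_ifs <;> simp_all

theorem scomp_eq_some_iff {f g p : SOp} :
    scomp f g = some p ↔ p.act = fun w => (g.act w).bind f.act := by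
  refine ⟨fun h => funext (act_scomp h), fun h => ?_⟩
  have hp := act_snd p
  rw [h, Option.bind_eq_some_iff] at hp
  obtain ⟨u, hg, hf⟩ := hp
  obtain ⟨q, hq⟩ := Option.isSome_iff_exists.1 (isSome_scomp_of_act hg hf)
  rw [hq, act_injective ((funext (act_scomp hq)).trans h.symm)]

theorem scomp_nil_left (f : SOp) : scomp ([], []) f = some f :=
  scomp_eq_some_iff.2 (by simp [act_nil])

theorem scomp_nil_right (f : SOp) : scomp f ([], []) = some f :=
  scomp_eq_some_iff.2 (by simp [act_nil])

theorem bind_scomp_left_eq_some_iff {a b c y : SOp} :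
    (scomp a b).bind (scomp · c) = some y ↔
      y.act = fun w => ((c.act w).bind b.act).bind a.act := by
  constructor
  · rw [Option.bind_eq_some_iff]
    rintro ⟨x, hab, hxc⟩
    rw [scomp_eq_some_iff.1 hxc, scomp_eq_some_iff.1 hab]
    simp only [Option.bind_assoc]
  · intro h
    have hy := act_snd y
    simp only [h, Option.bind_eq_some_iff] at hy
    obtain ⟨u, ⟨v, hcv, hbu⟩, hau⟩ := hy
    obtain ⟨x, hab⟩ := Option.isSome_iff_exists.1 (isSome_scomp_of_act hbu hau)
    have hxv : x.act v = some y.1 := by rw [act_scomp hab, hbu, Option.bind_some, hau]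
    obtain ⟨y', hxc⟩ := Option.isSome_iff_exists.1 (isSome_scomp_of_act hcv hxv)
    have hy' : y'.act = y.act := by
      rw [h, scomp_eq_some_iff.1 hxc, scomp_eq_some_iff.1 hab]
      simp only [Option.bind_assoc]
    rw [hab, Option.bind_some, hxc, act_injective hy']

theorem bind_scomp_right_eq_some_iff {a b c y : SOp} :
    (scomp b c).bind (scomp a) = some y ↔
      y.act = fun w => ((c.act w).bind b.act).bind a.act := by
  constructor
  · rw [Option.bind_eq_some_iff]
    rintro ⟨z, hbc, haz⟩
    rw [scomp_eq_some_iff.1 haz, scomp_eq_some_iff.1 hbc]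
  · intro h
    have hy := act_snd y
    simp only [h, Option.bind_eq_some_iff] at hy
    obtain ⟨u, ⟨v, hcv, hbu⟩, hau⟩ := hy
    obtain ⟨z, hbc⟩ := Option.isSome_iff_exists.1 (isSome_scomp_of_act hcv hbu)
    have hzv : z.act y.2 = some u := by rw [act_scomp hbc, hcv, Option.bind_some, hbu]
    obtain ⟨y', haz⟩ := Option.isSome_iff_exists.1 (isSome_scomp_of_act hzv hau)
    have hy' : y'.act = y.act := by
      rw [h, scomp_eq_some_iff.1 haz, scomp_eq_some_iff.1 hbc]
    rw [hbc, Option.bind_some, haz, act_injective hy']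

theorem scomp_assoc (a b c : SOp) :
    (scomp a b).bind (scomp · c) = (scomp b c).bind (scomp a) := by
  refine Option.ext fun y => ?_
  simp only [bind_scomp_left_eq_some_iff, bind_scomp_right_eq_some_iff]

theorem snd_length_le_fst_length_of_act {s : SOp} {w v : List ℕ} (h : s.act w = some v)
    (hwv : w.length ≤ v.length) : s.2.length ≤ s.1.length := by
  obtain ⟨x, rfl, rfl⟩ := act_eq_some_iff.1 h
  simpa using hwv

theorem snd_length_scomp_le {f s p : SOp} (h : scomp f s = some p)
    (hs : s.2.length ≤ s.1.length) : p.2.length ≤ max f.2.length s.2.length := by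
  unfold scomp at h
  split_ifs at h <;> cases h
  · exact le_max_right _ _
  · simp only [List.length_append, List.length_drop]
    omega

theorem mem_of_act {f : SOp} {w v : List ℕ} (h : f.act w = some v) {a : ℕ} (ha : a ∈ v) :
    a ∈ f.1 ∨ a ∈ w := by
  obtain ⟨x, rfl, rfl⟩ := act_eq_some_iff.1 h
  simp only [List.mem_append] at ha ⊢
  tauto

theorem fst_prefix_of_scomp_snd_ne {f g p : SOp} (h : scomp f g = some p) (hp : p.2 ≠ g.2) :
    g.1 <+: f.2 := by
  unfold scomp at h
  split_ifs at h with h₁ h₂ <;> cases h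
  · exact absurd rfl hp
  · exact h₂

theorem isCycleS_of_scomp_fst_eq {s p q : SOp} (h : scomp s p = some q) (hq : q.1 = p.1) :
    isCycleS s := by
  have hq' := act_snd q
  rw [act_scomp h, Option.bind_eq_some_iff] at hq'
  obtain ⟨v, hpv, hsv⟩ := hq'
  obtain ⟨x, -, rfl⟩ := act_eq_some_iff.1 hpv
  obtain ⟨y, hy, hsy⟩ := act_eq_some_iff.1 hsv
  refine isCycleS_of_prefix (w := p.1 ++ x) ?_ (hy ▸ List.prefix_append _ _)
  rw [← hq, hsy]
  exact (List.prefix_append _ _).trans (List.prefix_append _ _)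

def listProd : List SOp → Option SOp
  | [] => some ([], [])
  | f :: l => (listProd l).bind (scomp f)

theorem isSome_listProd_drop {l : List SOp} (h : (listProd l).isSome) (k : ℕ) :
    (listProd (l.drop k)).isSome := by
  induction l generalizing k with
  | nil => simpa using h
  | cons f l ih =>
    cases k with
    | zero => exact h
    | succ k => exact ih (Option.isSome_of_isSome_bind h) k

end SOp

theorem Set.finite_setOf_length_le_forall_mem {α : Type*} {S : Set α} (hS : S.Finite) (h : ℕ) :
    {w : List α | w.length ≤ h ∧ ∀ a ∈ w, a ∈ S}.Finite := by
  have := hS.to_subtype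
  refine ((List.finite_length_le S h).image (List.map (↑))).subset ?_
  rintro w ⟨hw, hwS⟩
  lift w to List S using hwS
  exact ⟨w, by simpa using hw, rfl⟩

theorem Nat.infinite_setOf_forall_le_of_le (ℓ : ℕ → ℕ) :
    {i | ∀ j, i ≤ j → ℓ i ≤ ℓ j}.Infinite := by
  refine Set.infinite_of_forall_exists_gt fun a => ?_
  obtain ⟨_, ⟨j, hj, rfl⟩, hmin⟩ :=
    wellFounded_lt.has_min (ℓ '' Set.Ioi a) ⟨_, a + 1, Set.mem_Ioi.2 a.lt_succ_self, rfl⟩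
  exact ⟨j, fun t ht => not_lt.1 (hmin _ ⟨t, hj.trans_le ht, rfl⟩), hj⟩

namespace SWiring

open SOp

theorem mem_smul {F G : SWiring} {p : SOp} :
    p ∈ smul F G ↔ ∃ f ∈ F, ∃ g ∈ G, scomp f g = some p := by
  simp [smul]

theorem smul_assoc (F G H : SWiring) : smul (smul F G) H = smul F (smul G H) := by
  ext y
  simp only [mem_smul]
  constructor
  · rintro ⟨x, ⟨a, ha, b, hb, hab⟩, c, hc, hxc⟩
    have h := scomp_assoc a b c
    rw [hab, Option.bind_some, hxc, eq_comm, Option.bind_eq_some_iff] at h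
    obtain ⟨z, hbc, haz⟩ := h
    exact ⟨a, ha, z, ⟨b, hb, c, hc, hbc⟩, haz⟩
  · rintro ⟨a, ha, z, ⟨b, hb, c, hc, hbc⟩, haz⟩
    have h := scomp_assoc a b c
    rw [hbc, Option.bind_some, haz, Option.bind_eq_some_iff] at h
    obtain ⟨x, hab, hxc⟩ := h
    exact ⟨x, ⟨a, ha, b, hb, hab⟩, c, hc, hxc⟩

theorem nil_smul (F : SWiring) : smul {([], [])} F = F := by
  ext p
  simp only [mem_smul, Finset.mem_singleton, exists_eq_left, scomp_nil_left,
    Option.some_inj, exists_eq_right]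

theorem smul_nil (F : SWiring) : smul F {([], [])} = F := by
  ext p
  simp only [mem_smul, Finset.mem_singleton, exists_eq_left, scomp_nil_right,
    Option.some_inj, exists_eq_right]

theorem spow_one (F : SWiring) : spow F 1 = F :=
  nil_smul F

theorem spow_add (F : SWiring) (m n : ℕ) : spow F (m + n) = smul (spow F m) (spow F n) := by
  induction n with
  | zero => exact (smul_nil _).symm
  | succ n ih => rw [← add_assoc, spow, ih, SWiring.smul_assoc, spow]

theorem spow_succ' (F : SWiring) (n : ℕ) : spow F (n + 1) = smul F (spow F n) := by
  rw [add_comm, spow_add, spow_one]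

theorem exists_isCycleS_mem_spow_two_pow_mul {F : SWiring} {k : ℕ} {c : SOp}
    (hc : c ∈ spow F k) (hcyc : isCycleS c) (m : ℕ) :
    ∃ d ∈ spow F (2 ^ m * k), isCycleS d := by
  induction m with
  | zero => exact ⟨c, by simpa using hc, hcyc⟩
  | succ m ih =>
    obtain ⟨d, hd, hdcyc⟩ := ih
    obtain ⟨e, hdd, hecyc⟩ := hdcyc.exists_scomp_self
    refine ⟨e, ?_, hecyc⟩
    rw [pow_succ, mul_two, add_mul, spow_add]
    exact mem_smul.2 ⟨d, hd, d, hd, hdd⟩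

theorem spow_eq_empty_of_le {F : SWiring} {m n : ℕ} (h : spow F m = ∅) (hmn : m ≤ n) :
    spow F n = ∅ := by
  induction n, hmn using Nat.le_induction with
  | base => exact h
  | succ n _ ih => simp [spow, ih, smul]

theorem not_cyclic_of_nilpotent {F : SWiring} (hF : SNilpotent F) : ¬ SCyclic F := by
  rintro ⟨k, hk, c, hc, hcyc⟩
  obtain ⟨n, -, hn⟩ := hF
  obtain ⟨d, hd, -⟩ := exists_isCycleS_mem_spow_two_pow_mul hc hcyc n
  have hle : n ≤ 2 ^ n * k := (Nat.lt_two_pow_self).le.trans (Nat.le_mul_of_pos_right _ hk)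
  simp [spow_eq_empty_of_le hn hle] at hd

theorem snd_length_le_wheightS {F : SWiring} {f : SOp} (hf : f ∈ F) :
    f.2.length ≤ wheightS F :=
  (le_max_right _ _).trans (Finset.le_sup (f := hOp) hf)

def IsRun (F : SWiring) (u : ℕ → List ℕ) : Prop :=
  ∀ n, ∃ f ∈ F, f.act (u n) = some (u (n + 1))

def IsChain (F : SWiring) (P : ℕ → SOp) : Prop :=
  ∀ n, ∃ f ∈ F, scomp f (P n) = some (P (n + 1))

section Run

variable {F : SWiring} {u : ℕ → List ℕ}

theorem mem_of_run (hu : F.IsRun u) (n : ℕ) {a : ℕ} (ha : a ∈ u n) :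
    a ∈ (u 0).toFinset ∪ symbolsS F := by
  induction n generalizing a with
  | zero => simp [ha]
  | succ n ih =>
    obtain ⟨f, hf, hfu⟩ := hu n
    rcases mem_of_act hfu ha with ha | ha
    · exact Finset.mem_union_right _
        (Finset.mem_biUnion.2 ⟨f, hf, Finset.mem_union_left _ (List.mem_toFinset.2 ha)⟩)
    · exact ih ha

theorem exists_mem_spow_act_of_run (hu : F.IsRun u) {i : ℕ}
    (hi : ∀ j, i ≤ j → (u i).length ≤ (u j).length) (d : ℕ) :
    ∃ s ∈ spow F d, s.act (u i) = some (u (i + d)) ∧ s.2.length ≤ wheightS F := by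
  induction d with
  | zero => exact ⟨([], []), by simp [spow], act_nil _, by simp⟩
  | succ d ih =>
    obtain ⟨s, hs, hsu, hsh⟩ := ih
    obtain ⟨f, hf, hfu⟩ := hu (i + d)
    obtain ⟨p, hp⟩ := Option.isSome_iff_exists.1 (isSome_scomp_of_act hsu hfu)
    refine ⟨p, spow_succ' F d ▸ mem_smul.2 ⟨f, hf, s, hs, hp⟩,
      by rw [act_scomp hp, hsu, Option.bind_some, hfu]; rfl, ?_⟩
    -- `u i` is lowest on the segment, so `s` is increasing and `f` cannot read below its body.
    exact (snd_length_scomp_le hp (snd_length_le_fst_length_of_act hsu (hi _ (by omega)))).trans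
      (max_le (snd_length_le_wheightS hf) hsh)

theorem cyclic_of_run (hu : F.IsRun u) : SCyclic F := by
  set h := wheightS F
  set S : Set ℕ := ↑((u 0).toFinset ∪ symbolsS F)
  have hmaps : Set.MapsTo (fun i => (u i).take h)
      {i | ∀ j, i ≤ j → (u i).length ≤ (u j).length}
      {w | w.length ≤ h ∧ ∀ a ∈ w, a ∈ S} := fun i _ =>
    ⟨List.length_take_le _ _, fun a ha => mem_of_run hu i (List.mem_of_mem_take ha)⟩
  obtain ⟨i, hi, j, -, hij, heq⟩ :=
    (Nat.infinite_setOf_forall_le_of_le _).exists_lt_map_eq_of_mapsTo hmaps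
      (Set.finite_setOf_length_le_forall_mem (Finset.finite_toSet _) h)
  obtain ⟨s, hs, hsu, hsh⟩ := exists_mem_spow_act_of_run hu hi (j - i)
  rw [Nat.add_sub_cancel' hij.le] at hsu
  obtain ⟨x, hx, hy⟩ := act_eq_some_iff.1 hsu
  refine ⟨j - i, by omega, s, hs,
    isCycleS_of_prefix (w := u j) (hy ▸ List.prefix_append _ _) ?_⟩
  have hs₂ : s.2 <+: (u i).take h :=
    List.prefix_take_iff.2 ⟨hx ▸ List.prefix_append _ _, hsh⟩
  exact (heq ▸ hs₂).trans (List.take_prefix _ _)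

end Run

section Chain

variable {F : SWiring} {P : ℕ → SOp}

theorem exists_mem_spow_scomp_of_chain (hP : F.IsChain P) (i d : ℕ) :
    ∃ s ∈ spow F d, scomp s (P i) = some (P (i + d)) := by
  induction d with
  | zero => exact ⟨([], []), by simp [spow], scomp_nil_left _⟩
  | succ d ih =>
    obtain ⟨s, hs, hsP⟩ := ih
    obtain ⟨f, hf, hfP⟩ := hP (i + d)
    have h := scomp_assoc f s (P i)
    rw [hsP, Option.bind_some, hfP, Option.bind_eq_some_iff] at h
    obtain ⟨p, hfs, hpP⟩ := h
    exact ⟨p, spow_succ' F d ▸ mem_smul.2 ⟨f, hf, s, hs, hfs⟩, hpP⟩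

theorem cyclic_of_chain_of_infinite (hP : F.IsChain P)
    (hG : {n | (P (n + 1)).2 ≠ (P n).2}.Infinite) : SCyclic F := by
  have hmaps : Set.MapsTo (fun n => (P n).1) {n | (P (n + 1)).2 ≠ (P n).2}
      ↑(F.biUnion fun f => f.2.inits.toFinset) := by
    intro n hn
    obtain ⟨f, hf, hfP⟩ := hP n
    simp only [Finset.coe_biUnion, Finset.mem_coe, List.mem_toFinset, List.mem_inits,
      Set.mem_iUnion, exists_prop]
    exact ⟨f, hf, fst_prefix_of_scomp_snd_ne hfP hn⟩
  obtain ⟨i, -, j, -, hij, heq⟩ := hG.exists_lt_map_eq_of_mapsTo hmaps (Finset.finite_toSet _)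
  obtain ⟨s, hs, hsP⟩ := exists_mem_spow_scomp_of_chain hP i (j - i)
  rw [Nat.add_sub_cancel' hij.le] at hsP
  exact ⟨j - i, by omega, s, hs, isCycleS_of_scomp_fst_eq hsP heq.symm⟩

theorem IsChain.isRun_fst {N : ℕ} (hP : F.IsChain P) (hN : ∀ n, (P (N + n)).2 = (P N).2) :
    F.IsRun fun n => (P (N + n)).1 := by
  intro n
  obtain ⟨f, hf, hfP⟩ := hP (N + n)
  refine ⟨f, hf, ?_⟩
  have h₁ : (P (N + n)).act (P N).2 = some (P (N + n)).1 := by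
    rw [← hN n]
    exact act_snd _
  have h₂ : (P (N + n + 1)).act (P N).2 = some (P (N + n + 1)).1 := by
    rw [← hN (n + 1)]
    exact act_snd _
  have h := act_scomp hfP (P N).2
  rw [h₁, h₂, Option.bind_some] at h
  exact h.symm

theorem cyclic_of_chain (hP : F.IsChain P) : SCyclic F := by
  by_cases hG : {n | (P (n + 1)).2 ≠ (P n).2}.Infinite
  · exact cyclic_of_chain_of_infinite hP hG
  obtain ⟨N, hN⟩ := (Set.not_infinite.1 hG).bddAbove
  have hσ : ∀ n, (P (N + 1 + n)).2 = (P (N + 1)).2 := by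
    intro n
    induction n with
    | zero => rfl
    | succ n ih =>
      rw [← ih]
      by_contra h
      exact absurd (hN (show N + 1 + n ∈ {n | (P (n + 1)).2 ≠ (P n).2} from h)) (by omega)
  exact cyclic_of_run (hP.isRun_fst hσ)

end Chain

theorem exists_listProd_of_mem_spow {F : SWiring} {n : ℕ} {p : SOp} (hp : p ∈ spow F n) :
    ∃ l : List F, l.length = n ∧ listProd (l.map (↑)) = some p := by
  induction n generalizing p with
  | zero =>
    rw [Finset.mem_singleton.1 hp]
    exact ⟨[], rfl, rfl⟩
  | succ n ih =>
    rw [spow_succ', mem_smul] at hp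
    obtain ⟨f, hf, q, hq, hfq⟩ := hp
    obtain ⟨l, hl, hlq⟩ := ih hq
    exact ⟨⟨f, hf⟩ :: l, by simp [hl], by simp [listProd, hlq, hfq]⟩

theorem exists_chain_of_forall_nonempty {F : SWiring} (hF : ∀ n, (spow F n).Nonempty) :
    ∃ P, F.IsChain P := by
  -- Length-`n` sequences of flows, newest (applied last) first; `drop` forgets the newest ones.
  let α (n : ℕ) := {l : List F // l.length = n ∧ (listProd (l.map (↑))).isSome}
  have (n : ℕ) : Finite (α n) :=
    ((List.finite_length_eq F n).subset fun _ hl => hl.1).to_subtype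
  have (n : ℕ) : Nonempty (α n) := by
    obtain ⟨p, hp⟩ := hF n
    obtain ⟨l, hl, hlp⟩ := exists_listProd_of_mem_spow hp
    exact ⟨l, hl, by simp [hlp]⟩
  obtain ⟨l, hl⟩ := exists_seq_forall_proj_of_forall_finite (α := α)
    (fun {i j} _ l => ⟨l.1.drop (j - i), by simp [l.2.1]; omega,
      by simpa using isSome_listProd_drop l.2.2 (j - i)⟩)
    (fun _ _ => Subtype.ext (by simp))
    (fun _ _ _ _ _ _ => Subtype.ext (by simp; congr 1; omega))
    (fun _ _ => Set.toFinite _)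
  have hcons (n : ℕ) : ∃ f : F, (l (n + 1)).1 = f :: (l n).1 := by
    obtain ⟨f, t, ht⟩ := List.exists_cons_of_length_eq_add_one (l (n + 1)).2.1
    have h := congrArg Subtype.val (hl (Nat.le_add_right n 1))
    simp only [ht, Nat.add_sub_cancel_left, List.drop_one, List.tail_cons] at h
    exact ⟨f, ht.trans (congrArg _ h)⟩
  choose f hf using hcons
  choose P hP using fun n => Option.isSome_iff_exists.1 (l n).2.2
  refine ⟨P, fun n => ⟨f n, (f n).2, ?_⟩⟩
  have h := hP (n + 1)
  rwa [hf n, List.map_cons, listProd, hP n, Option.bind_some] at h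

theorem cyclic_of_not_nilpotent {F : SWiring} (hF : ¬ SNilpotent F) : SCyclic F := by
  have hne (n : ℕ) : (spow F n).Nonempty := by
    rw [Finset.nonempty_iff_ne_empty]
    cases n with
    | zero => simp [spow]
    | succ n => exact fun h => hF ⟨n + 1, n.succ_pos, h⟩
  obtain ⟨P, hP⟩ := exists_chain_of_forall_nonempty hne
  exact cyclic_of_chain hP

end SWiring

/-- a wiring of the Stack semiring is nilpotent iff it is
acyclic (no power contains a cycle). -/
theorem stack_nilpotent_iff_acyclic (F : SWiring) :
    SNilpotent F ↔ ¬ SCyclic F :=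
  ⟨SWiring.not_cyclic_of_nilpotent, not_imp_comm.1 SWiring.cyclic_of_not_nilpotent⟩
end

section
/- A unary query Q = (D, P, G) succeeds if and only if ACCEPT(x) ⊣ START(x) belongs to sat(⟦D⟧ + P + ⟦G⟧), the saturation of the encoded query. -/
/-! Unary logic programming.  A closed unary term `τ(c)` is a pair
`(τ, c)` of a sequence of unary symbols and a constant.  A unary program is a
wiring of the Stack semiring, its elements read as clauses `τ(x) ⊣ σ(x)`. -/

/-- A closed unary term `τ(c)`. -/
abbrev CT := List ℕ × ℕ

/-- Derivability by resolution from the facts `d ⊣` (`d ∈ D`) and the clauses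
`τ(x) ⊣ σ(x)` of `P`. -/
inductive Derive (D : Finset CT) (P : SWiring) : CT → Prop
  | fact {d : CT} : d ∈ D → Derive D P d
  | step {f : SOp} {μ : List ℕ} {c : ℕ} :
      f ∈ P → Derive D P (f.2 ++ μ, c) → Derive D P (f.1 ++ μ, c)

/-- A unary query `(D, P, G)` succeeds when the goal is derivable. -/
def Succeeds (D : Finset CT) (P : SWiring) (G : CT) : Prop := Derive D P G

/-- Symbol renaming keeping program/data symbols clear of the fresh
symbols: unary program symbols `s ↦ 2s+3`. -/
def rl (s : ℕ) : ℕ := 2 * s + 3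

/-- The unary symbol `𝐜` associated to the constant `c`. -/
def cSym (c : ℕ) : ℕ := 2 * c + 2

/-- The fresh unary symbol `START`. -/
def START : ℕ := 0

/-- The fresh unary symbol `ACCEPT`. -/
def ACCEPT : ℕ := 1

/-- Encoding of a unary data: `⟦D⟧ = { τ(𝐜(x)) ⊣ START(x) : τ(c) ∈ D }`. -/
def encD (D : Finset CT) : SWiring :=
  D.image fun d => (d.1.map rl ++ [cSym d.2], [START])

/-- Encoding of a unary goal `G = τ(c)`: `⟦G⟧ = ACCEPT(x) ⊣ τ(𝐜(x))`. -/
def encG (G : CT) : SOp := ([ACCEPT], G.1.map rl ++ [cSym G.2])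

/-- The program part of a query, with its symbols renamed by `rl`. -/
def encP (P : SWiring) : SWiring := P.image fun f => (f.1.map rl, f.2.map rl)

/-! Read a flow `τ ⊣ σ` as the rewriting `σμ ↦ τμ` of words (closed unary terms over the
variable `x`). Every word reachable from `START(x)` under the flows of `⟦D⟧ + P + ⟦G⟧` has the
form `α(s(x))` with `s` one of `START`, `𝐜`, `ACCEPT`, and when `s = 𝐜` the term `α(c)` is
derivable; hence the query succeeds iff `ACCEPT(x)` is reachable from `START(x)`.

Each flow of the saturation is a composite of such rewritings, which gives soundness.
Conversely, a rewriting path whose interior never drops below its two endpoints collapses to a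
single flow of the saturation: split it at an interior word of minimal height; the first half is
then realised by an increasing flow, the second by a decreasing one, and their product is a
shortcut. A path from `START(x)` to `ACCEPT(x)` never drops below height `1`. -/

open Relation

def Rewrites (f : SOp) (a b : List ℕ) : Prop := ∃ μ, a = f.2 ++ μ ∧ b = f.1 ++ μ

def FlowStep (S : Set SOp) (a b : List ℕ) : Prop := ∃ f ∈ S, Rewrites f a b

lemma FlowStep.mono {S T : Set SOp} (hST : S ⊆ T) {a b : List ℕ} (h : FlowStep S a b) :
    FlowStep T a b :=
  let ⟨f, hf, hab⟩ := h
  ⟨f, hST hf, hab⟩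

lemma incP_of_rewrites {f : SOp} {a b : List ℕ} (h : Rewrites f a b)
    (hab : a.length ≤ b.length) : incP f := by
  obtain ⟨μ, rfl, rfl⟩ := h
  simp only [List.length_append] at hab
  exact Nat.le_of_add_le_add_right hab

lemma decP_of_rewrites {f : SOp} {a b : List ℕ} (h : Rewrites f a b)
    (hba : b.length ≤ a.length) : decP f := by
  obtain ⟨μ, rfl, rfl⟩ := h
  simp only [List.length_append] at hba
  exact Nat.le_of_add_le_add_right hba

lemma rewrites_of_scomp_eq_some {f g χ : SOp} (h : scomp f g = some χ) {a b : List ℕ}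
    (hab : Rewrites χ a b) : ∃ c, Rewrites g a c ∧ Rewrites f c b := by
  obtain ⟨μ, rfl, rfl⟩ := hab
  unfold scomp at h
  split_ifs at h with h₁ h₂
  · obtain ⟨u, hu⟩ := h₁
    cases h
    refine ⟨g.1 ++ μ, ⟨μ, rfl, rfl⟩, u ++ μ, by rw [← hu, List.append_assoc], ?_⟩
    rw [← hu, List.drop_left, List.append_assoc]
  · obtain ⟨u, hu⟩ := h₂
    cases h
    refine ⟨g.1 ++ (u ++ μ), ⟨u ++ μ, ?_, rfl⟩, μ, by rw [← hu, List.append_assoc], rfl⟩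
    rw [← hu, List.drop_left, List.append_assoc]

lemma scomp_eq_some_of_rewrites {f g : SOp} {a b c : List ℕ} (hac : Rewrites g a c)
    (hcb : Rewrites f c b) : ∃ χ, scomp f g = some χ ∧ Rewrites χ a b := by
  obtain ⟨μ, rfl, rfl⟩ := hac
  obtain ⟨ν, hν, rfl⟩ := hcb
  by_cases hp : f.2 <+: g.1
  · obtain ⟨u, hu⟩ := hp
    obtain rfl : ν = u ++ μ := by
      rw [← hu, List.append_assoc] at hν
      exact (List.append_cancel_left hν).symm
    refine ⟨(f.1 ++ u, g.2), ?_, μ, rfl, (List.append_assoc _ _ _).symm⟩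
    rw [scomp, if_pos ⟨u, hu⟩, ← hu, List.drop_left]
  · obtain ⟨u, hu, rfl⟩ : ∃ u, f.2 = g.1 ++ u ∧ μ = u ++ ν := by
      rcases List.append_eq_append_iff.1 hν with h | ⟨u, hu, -⟩
      · exact h
      · exact absurd ⟨u, hu.symm⟩ hp
    refine ⟨(f.1, g.2 ++ u), ?_, ν, (List.append_assoc _ _ _).symm, rfl⟩
    rw [scomp, if_neg hp, if_pos ⟨u, hu.symm⟩, hu, List.drop_left]

lemma mem_smul {A B : SWiring} {χ : SOp} :
    χ ∈ smul A B ↔ ∃ f ∈ A, ∃ g ∈ B, scomp f g = some χ := by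
  simp [smul]

lemma mem_satSet_iff {F : SWiring} {φ : SOp} : φ ∈ satSet F ↔ ∃ n, φ ∈ short^[n] F := by
  simp [satSet]

lemma monotone_short_iterate (F : SWiring) : Monotone fun n => short^[n] F :=
  monotone_nat_of_le_succ fun n => by
    rw [Function.iterate_succ_apply']
    exact Finset.subset_union_left

lemma subset_satSet (F : SWiring) : (F : Set SOp) ⊆ satSet F :=
  fun _ hφ => mem_satSet_iff.2 ⟨0, hφ⟩

lemma scomp_mem_satSet {F : SWiring} {f g χ : SOp} (hf : f ∈ satSet F) (hg : g ∈ satSet F)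
    (hdec : decP f) (hinc : incP g) (h : scomp f g = some χ) : χ ∈ satSet F := by
  obtain ⟨m, hm⟩ := mem_satSet_iff.1 hf
  obtain ⟨n, hn⟩ := mem_satSet_iff.1 hg
  refine mem_satSet_iff.2 ⟨max m n + 1, ?_⟩
  rw [Function.iterate_succ_apply']
  refine Finset.mem_union_right _ (mem_smul.2 ⟨f, ?_, g, ?_, h⟩)
  · exact Finset.mem_filter.2 ⟨monotone_short_iterate F (le_max_left m n) hm, hdec⟩
  · exact Finset.mem_filter.2 ⟨monotone_short_iterate F (le_max_right m n) hn, hinc⟩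

lemma reflTransGen_of_flowStep_satSet {F : SWiring} {a b : List ℕ}
    (h : FlowStep (satSet F) a b) : ReflTransGen (FlowStep F) a b := by
  obtain ⟨φ, hφ, hab⟩ := h
  obtain ⟨n, hn⟩ := mem_satSet_iff.1 hφ
  induction n generalizing φ a b with
  | zero => exact .single ⟨φ, hn, hab⟩
  | succ n ih =>
    rw [Function.iterate_succ_apply'] at hn
    rcases Finset.mem_union.1 hn with hn | hn
    · exact ih φ (mem_satSet_iff.2 ⟨n, hn⟩) hab hn
    · obtain ⟨f, hf, g, hg, hfg⟩ := mem_smul.1 hn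
      have hf := (Finset.mem_filter.1 hf).1
      have hg := (Finset.mem_filter.1 hg).1
      obtain ⟨c, hac, hcb⟩ := rewrites_of_scomp_eq_some hfg hab
      exact (ih g (mem_satSet_iff.2 ⟨n, hg⟩) hac hg).trans (ih f (mem_satSet_iff.2 ⟨n, hf⟩) hcb hf)

lemma flowStep_satSet_of_valley {F : SWiring} {t : ℕ → List ℕ} {m n : ℕ} (hmn : m < n)
    (hstep : ∀ j, m ≤ j → j < n → FlowStep F (t j) (t (j + 1)))
    (hval : ∀ j, m < j → j < n → (t m).length ≤ (t j).length ∧ (t n).length ≤ (t j).length) :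
    FlowStep (satSet F) (t m) (t n) := by
  induction hd : n - m using Nat.strong_induction_on generalizing m n with
  | _ d ih =>
  rcases eq_or_lt_of_le (Nat.succ_le_of_lt hmn) with rfl | hlt
  · exact (hstep m le_rfl (by omega)).mono (subset_satSet F)
  · obtain ⟨i, hi, hmin⟩ := Finset.exists_min_image (Finset.Ioo m n) (fun j => (t j).length)
      ⟨m + 1, Finset.mem_Ioo.2 ⟨Nat.lt_succ_self m, hlt⟩⟩
    rw [Finset.mem_Ioo] at hi
    obtain ⟨φ, hφ, hmi⟩ := ih (i - m) (by omega) hi.1 (fun j hj hj' => hstep j hj (by omega))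
      (fun j hj hj' => ⟨(hval j hj (by omega)).1, hmin j (Finset.mem_Ioo.2 ⟨hj, by omega⟩)⟩) rfl
    obtain ⟨ψ, hψ, hin⟩ := ih (n - i) (by omega) hi.2 (fun j hj hj' => hstep j (by omega) hj')
      (fun j hj hj' => ⟨hmin j (Finset.mem_Ioo.2 ⟨by omega, hj'⟩), (hval j (by omega) hj').2⟩) rfl
    obtain ⟨χ, hχ, hmn'⟩ := scomp_eq_some_of_rewrites hmi hin
    exact ⟨χ, scomp_mem_satSet hψ hφ (decP_of_rewrites hin (hval i hi.1 hi.2).2)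
      (incP_of_rewrites hmi (hval i hi.1 hi.2).1) hχ, hmn'⟩

lemma exists_chain_of_reflTransGen {α : Type*} {r : α → α → Prop} {a b : α}
    (h : ReflTransGen r a b) :
    ∃ n, ∃ t : ℕ → α, t 0 = a ∧ t n = b ∧ ∀ j < n, r (t j) (t (j + 1)) := by
  induction h with
  | refl => exact ⟨0, fun _ => a, rfl, rfl, by simp⟩
  | @tail b c _ hbc ih =>
    obtain ⟨n, t, h0, hn, hstep⟩ := ih
    refine ⟨n + 1, fun j => if j ≤ n then t j else c, by simpa using h0, by simp, fun j hj => ?_⟩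
    rcases Nat.lt_or_ge j n with hj' | hj'
    · simpa [hj'.le, Nat.succ_le_of_lt hj'] using hstep j hj'
    · obtain rfl : j = n := by omega
      simpa [hn] using hbc

lemma flowStep_satSet_of_reflTransGen {F : SWiring} {a b : List ℕ}
    (hab : ReflTransGen (FlowStep F) a b) (hne : a ≠ b) (hlen : a.length = b.length)
    (hmin : ∀ w, ReflTransGen (FlowStep F) a w → a.length ≤ w.length) :
    FlowStep (satSet F) a b := by
  obtain ⟨n, t, rfl, rfl, hstep⟩ := exists_chain_of_reflTransGen hab
  have hreach : ∀ j ≤ n, ReflTransGen (FlowStep F) (t 0) (t j) := by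
    intro j hj
    induction j with
    | zero => exact .refl
    | succ j ih => exact (ih (by omega)).tail (hstep j (by omega))
  have hpos : 0 < n := Nat.pos_of_ne_zero (by rintro rfl; exact hne rfl)
  refine flowStep_satSet_of_valley hpos (fun j _ hj => hstep j hj) fun j _ hj => ?_
  have := hmin _ (hreach j hj.le)
  exact ⟨this, hlen ▸ this⟩

lemma flowStep_singleton_iff {S : Set SOp} {x y : ℕ} (hxy : x ≠ y) :
    FlowStep S [x] [y] ↔ ([y], [x]) ∈ S := by
  refine ⟨fun ⟨f, hf, μ, hx, hy⟩ => ?_, fun h => ⟨_, h, [], rfl, rfl⟩⟩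
  rcases List.singleton_eq_append_iff.1 hx with ⟨-, rfl⟩ | ⟨hf2, rfl⟩
  · rcases List.singleton_eq_append_iff.1 hy with ⟨-, h⟩ | ⟨-, h⟩
    · exact absurd (List.singleton_inj.1 h) hxy
    · exact absurd h (List.cons_ne_nil _ _)
  · rcases List.singleton_eq_append_iff.1 hy with ⟨-, h⟩ | ⟨hf1, -⟩
    · exact absurd h.symm (List.cons_ne_nil _ _)
    · rwa [← Prod.mk.eta (p := f), hf1, hf2] at hf

lemma exists_eq_append_of_map_append_eq {ι κ : Type*} {g : ι → κ} (hg : Function.Injective g)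
    {x : κ} (hx : x ∉ Set.range g) {l₁ l₂ : List ι} {μ : List κ}
    (h : l₁.map g ++ μ = l₂.map g ++ [x]) : ∃ ν, l₂ = l₁ ++ ν ∧ μ = ν.map g ++ [x] := by
  induction l₁ generalizing l₂ with
  | nil => exact ⟨l₂, rfl, h⟩
  | cons b l₁ ih =>
    rcases l₂ with _ | ⟨a, l₂⟩
    · simp only [List.map_cons, List.cons_append, List.map_nil, List.nil_append,
        List.cons.injEq] at h
      exact absurd ⟨b, h.1⟩ hx
    · simp only [List.map_cons, List.cons_append, List.cons.injEq] at h
      obtain ⟨ν, rfl, rfl⟩ := ih h.2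
      exact ⟨ν, by rw [hg h.1, List.cons_append], rfl⟩

lemma eq_of_map_append_singleton_append_eq {ι κ : Type*} {g : ι → κ}
    (hg : Function.Injective g) {x y : κ} (hx : x ∉ Set.range g) (hy : y ∉ Set.range g)
    {l₁ l₂ : List ι} {μ : List κ} (h : l₁.map g ++ [y] ++ μ = l₂.map g ++ [x]) :
    l₂ = l₁ ∧ y = x ∧ μ = [] := by
  rw [List.append_assoc] at h
  obtain ⟨ν, rfl, hν⟩ := exists_eq_append_of_map_append_eq hg hx h
  rcases ν with _ | ⟨a, ν⟩
  · simpa using hν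
  · simp only [List.map_cons, List.cons_append, List.cons.injEq] at hν
    exact absurd ⟨a, hν.1.symm⟩ hy

lemma rl_injective : Function.Injective rl := fun a b h => by
  simp only [rl] at h
  omega

lemma cSym_injective : Function.Injective cSym := fun a b h => by
  simp only [cSym] at h
  omega

lemma START_notMem_range_rl : START ∉ Set.range rl := by
  rintro ⟨s, h⟩
  simp [rl, START] at h

lemma ACCEPT_notMem_range_rl : ACCEPT ∉ Set.range rl := by
  rintro ⟨s, h⟩
  simp only [rl, ACCEPT] at h
  omega

lemma cSym_notMem_range_rl (c : ℕ) : cSym c ∉ Set.range rl := by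
  rintro ⟨s, h⟩
  simp only [rl, cSym] at h
  omega

lemma cSym_ne_START (c : ℕ) : cSym c ≠ START := by simp [cSym, START]

lemma cSym_ne_ACCEPT (c : ℕ) : cSym c ≠ ACCEPT := by
  simp only [cSym, ACCEPT]
  omega

def encQuery (D : Finset CT) (P : SWiring) (G : CT) : SWiring := encD D ∪ encP P ∪ {encG G}

section Query

variable {D : Finset CT} {P : SWiring} {G : CT}

lemma reflTransGen_of_derive {d : CT} (h : Derive D P d) :
    ReflTransGen (FlowStep (encQuery D P G)) [START] (d.1.map rl ++ [cSym d.2]) := by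
  induction h with
  | fact hd =>
    refine .single ⟨(_, [START]), ?_, [], rfl, (List.append_nil _).symm⟩
    exact Finset.mem_union_left _ (Finset.mem_union_left _ (Finset.mem_image_of_mem _ hd))
  | @step f μ c hf _ ih =>
    refine ih.tail ⟨(f.1.map rl, f.2.map rl), ?_, μ.map rl ++ [cSym c], by simp, by simp⟩
    exact Finset.mem_union_left _ (Finset.mem_union_right _ (Finset.mem_image_of_mem _ hf))

/-- The invariant of words `α·x` reachable from `START(x)`: the bottom symbol `x` records
whether the word is still generic, encodes a derived fact `α(c)`, or has accepted. -/
def ReachInv (D : Finset CT) (P : SWiring) (G : CT) (α : List ℕ) (x : ℕ) : Prop :=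
  x = START ∨ (∃ c, x = cSym c ∧ Derive D P (α, c)) ∨ (x = ACCEPT ∧ Succeeds D P G)

lemma ReachInv.notMem_range_rl {α : List ℕ} {x : ℕ} (h : ReachInv D P G α x) :
    x ∉ Set.range rl := by
  rcases h with rfl | ⟨c, rfl, -⟩ | ⟨rfl, -⟩
  exacts [START_notMem_range_rl, cSym_notMem_range_rl c, ACCEPT_notMem_range_rl]

lemma reachInv_of_flowStep {α : List ℕ} {x : ℕ} {w : List ℕ} (hαx : ReachInv D P G α x)
    (h : FlowStep (encQuery D P G) (α.map rl ++ [x]) w) :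
    ∃ β y, w = β.map rl ++ [y] ∧ ReachInv D P G β y := by
  obtain ⟨f, hf, μ, hw, rfl⟩ := h
  simp only [encQuery, encD, encP, Finset.coe_union, Finset.coe_image, Finset.coe_singleton,
    Set.mem_union, Set.mem_image, Finset.mem_coe, Set.mem_singleton_iff] at hf
  rcases hf with (⟨d, hd, rfl⟩ | ⟨p, hp, rfl⟩) | rfl
  · obtain ⟨rfl, rfl, rfl⟩ := eq_of_map_append_singleton_append_eq (l₁ := []) rl_injective
      hαx.notMem_range_rl START_notMem_range_rl hw.symm
    exact ⟨d.1, cSym d.2, List.append_nil _, .inr (.inl ⟨d.2, rfl, .fact hd⟩)⟩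
  · obtain ⟨ν, rfl, rfl⟩ :=
      exists_eq_append_of_map_append_eq rl_injective hαx.notMem_range_rl hw.symm
    refine ⟨p.1 ++ ν, x, by simp, ?_⟩
    rcases hαx with h | ⟨c, h, hd⟩ | h
    exacts [.inl h, .inr (.inl ⟨c, h, .step hp hd⟩), .inr (.inr h)]
  · obtain ⟨rfl, rfl, rfl⟩ := eq_of_map_append_singleton_append_eq rl_injective
      hαx.notMem_range_rl (cSym_notMem_range_rl G.2) hw.symm
    refine ⟨[], ACCEPT, rfl, .inr (.inr ⟨rfl, ?_⟩)⟩
    rcases hαx with h | ⟨c, h, hd⟩ | ⟨h, -⟩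
    · exact absurd h (cSym_ne_START _)
    · rwa [← cSym_injective h] at hd
    · exact absurd h (cSym_ne_ACCEPT _)

lemma reachInv_of_reflTransGen {w : List ℕ}
    (h : ReflTransGen (FlowStep (encQuery D P G)) [START] w) :
    ∃ α x, w = α.map rl ++ [x] ∧ ReachInv D P G α x := by
  induction h with
  | refl => exact ⟨[], START, rfl, .inl rfl⟩
  | tail _ hstep ih =>
    obtain ⟨α, x, rfl, hαx⟩ := ih
    exact reachInv_of_flowStep hαx hstep

lemma succeeds_iff_reflTransGen :
    Succeeds D P G ↔ ReflTransGen (FlowStep (encQuery D P G)) [START] [ACCEPT] := by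
  refine ⟨fun h => (reflTransGen_of_derive h).tail ⟨encG G, ?_, [], by simp [encG], rfl⟩,
    fun h => ?_⟩
  · exact Finset.mem_union_right _ (Finset.mem_singleton_self _)
  obtain ⟨α, x, hw, hαx⟩ := reachInv_of_reflTransGen h
  obtain rfl : x = ACCEPT := by
    have := congrArg List.getLast? hw
    simpa using this.symm
  rcases hαx with h | ⟨c, h, -⟩ | ⟨-, h⟩
  · simp [START, ACCEPT] at h
  · exact absurd h.symm (cSym_ne_ACCEPT c)
  · exact h

lemma one_le_length_of_reflTransGen {w : List ℕ}
    (h : ReflTransGen (FlowStep (encQuery D P G)) [START] w) : 1 ≤ w.length := by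
  obtain ⟨α, x, rfl, -⟩ := reachInv_of_reflTransGen h
  simp

end Query

/-- saturation of unary queries: a unary query `(D, P, G)`
succeeds iff `ACCEPT(x) ⊣ START(x)` belongs to `sat(⟦D⟧ + P + ⟦G⟧)`. -/
theorem query_success_saturation (D : Finset CT) (P : SWiring) (G : CT) :
    Succeeds D P G ↔
      ([ACCEPT], [START]) ∈ satSet (encD D ∪ encP P ∪ {encG G}) :=
  calc Succeeds D P G ↔ ReflTransGen (FlowStep (encQuery D P G)) [START] [ACCEPT] :=
        succeeds_iff_reflTransGen
    _ ↔ FlowStep (satSet (encQuery D P G)) [START] [ACCEPT] :=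
        ⟨fun h => flowStep_satSet_of_reflTransGen h (by decide) rfl
          fun _ => one_le_length_of_reflTransGen, reflTransGen_of_flowStep_satSet⟩
    _ ↔ _ := flowStep_singleton_iff (by decide)
end
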